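/- For every finite consistent pair p of closed formulas in a signature Σ with p⁺ a singleton, the canonical term model M[p] is an adequate, finite, irreflexive, rooted relational model with constant domain, and at its root w every formula of p⁺ is satisfied while no formula of p⁻ is satisfied (under any assignment, since all formulas of p are closed). -/

import Mathlib

namespace QRC1

/-- Strictly positive formulas of QRC₁ over a signature with constants `Cst`,
relation symbols `Rl`, and arity function `ar`.  Terms are either variables
(natural numbers, left) or constants (right). -/
inductive Fml (Cst Rl : Type) (ar : Rl → ℕ) : Type
  | top : Fml Cst Rl ar
  | rel (S : Rl) (ts : Fin (ar S) → ℕ ⊕ Cst) : Fml Cst Rl ar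
  | and (φ ψ : Fml Cst Rl ar) : Fml Cst Rl ar
  | dia (φ : Fml Cst Rl ar) : Fml Cst Rl ar
  | all (x : ℕ) (φ : Fml Cst Rl ar) : Fml Cst Rl ar

namespace Fml

variable {Cst Rl : Type} {ar : Rl → ℕ}

/-- Free variables of a formula. -/
def fv : Fml Cst Rl ar → Set ℕ
  | .top => ∅
  | .rel _ ts => {x | ∃ i, ts i = Sum.inl x}
  | .and φ ψ => fv φ ∪ fv ψ
  | .dia φ => fv φ
  | .all y φ => fv φ \ {y}

/-- A formula is closed when it has no free variables. -/
def Closed (φ : Fml Cst Rl ar) : Prop := φ.fv = ∅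

/-- Constants occurring in a formula. -/
def consts : Fml Cst Rl ar → Set Cst
  | .top => ∅
  | .rel _ ts => {c | ∃ i, ts i = Sum.inr c}
  | .and φ ψ => consts φ ∪ consts ψ
  | .dia φ => consts φ
  | .all _ φ => consts φ

/-- Substitution of a term for a variable, on terms. -/
def substT (x : ℕ) (t : ℕ ⊕ Cst) : ℕ ⊕ Cst → ℕ ⊕ Cst
  | .inl y => if y = x then t else .inl y
  | .inr c => .inr c

/-- `φ.subst x t` replaces all free occurrences of variable `x` in `φ` by the term `t`. -/
def subst : Fml Cst Rl ar → ℕ → (ℕ ⊕ Cst) → Fml Cst Rl ar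
  | .top, _, _ => .top
  | .rel S ts, x, t => .rel S (fun i => substT x t (ts i))
  | .and φ ψ, x, t => .and (φ.subst x t) (ψ.subst x t)
  | .dia φ, x, t => .dia (φ.subst x t)
  | .all y φ, x, t => if y = x then .all y φ else .all y (φ.subst x t)

/-- `FreeFor t x φ`: the term `t` is free for the variable `x` in `φ`, i.e. no
free occurrence of a variable of `t` becomes bound in `φ[x/t]`. -/
def FreeFor (t : ℕ ⊕ Cst) (x : ℕ) : Fml Cst Rl ar → Prop
  | .top => True
  | .rel _ _ => True
  | .and φ ψ => FreeFor t x φ ∧ FreeFor t x ψ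
  | .dia φ => FreeFor t x φ
  | .all y φ => x ∉ fv (Fml.all y φ) ∨ (t ≠ .inl y ∧ FreeFor t x φ)

/-- Modal depth. -/
def mdepth : Fml Cst Rl ar → ℕ
  | .top => 0
  | .rel _ _ => 0
  | .and φ ψ => max φ.mdepth ψ.mdepth
  | .dia φ => φ.mdepth + 1
  | .all _ φ => φ.mdepth

/-- Quantifier depth. -/
def udepth : Fml Cst Rl ar → ℕ
  | .top => 0
  | .rel _ _ => 0
  | .and φ ψ => max φ.udepth ψ.udepth
  | .dia φ => φ.udepth
  | .all _ φ => φ.udepth + 1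

/-- Number of distinct constants occurring in a formula. -/
noncomputable def cdepth (φ : Fml Cst Rl ar) : ℕ := φ.consts.ncard

/-- Size of a formula (for termination purposes). -/
def size : Fml Cst Rl ar → ℕ
  | .top => 1
  | .rel _ _ => 1
  | .and φ ψ => φ.size + ψ.size + 1
  | .dia φ => φ.size + 1
  | .all _ φ => φ.size + 1

theorem size_subst (φ : Fml Cst Rl ar) (x : ℕ) (t : ℕ ⊕ Cst) :
    (φ.subst x t).size = φ.size := by
  induction φ generalizing x t with
  | top => rfl
  | rel S ts => rfl
  | and φ ψ ihφ ihψ => simp [subst, size, ihφ, ihψ]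
  | dia φ ih => simp [subst, size, ih]
  | all y φ ih => by_cases h : y = x <;> simp [subst, h, size, ih]

/-- The closure of a formula under a set of constants `C`, where the
subformulas of `∀x φ` are all `φ[x/c]` for `c ∈ C`. -/
def cl (C : Set Cst) : Fml Cst Rl ar → Set (Fml Cst Rl ar)
  | .top => {.top}
  | .rel S ts => {.rel S ts, .top}
  | .and φ ψ => {.and φ ψ} ∪ φ.cl C ∪ ψ.cl C
  | .dia φ => {.dia φ} ∪ φ.cl C
  | .all x φ => {.all x φ} ∪ ⋃ c ∈ C, (φ.subst x (.inr c)).cl C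
termination_by φ => φ.size
decreasing_by all_goals (simp [size, size_subst]; try omega)

/-- Renaming of constants along a map `f` (used for signature extensions). -/
def mapC {Cst' : Type} (f : Cst → Cst') : Fml Cst Rl ar → Fml Cst' Rl ar
  | .top => .top
  | .rel S ts => .rel S (fun i => Sum.map id f (ts i))
  | .and φ ψ => .and (φ.mapC f) (ψ.mapC f)
  | .dia φ => .dia (φ.mapC f)
  | .all x φ => .all x (φ.mapC f)

/-- Simultaneous substitution of terms for variables. -/
def msubst (σ : ℕ → ℕ ⊕ Cst) : Fml Cst Rl ar → Fml Cst Rl ar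
  | .top => .top
  | .rel S ts => .rel S (fun i => match ts i with
      | .inl x => σ x
      | .inr c => .inr c)
  | .and φ ψ => .and (φ.msubst σ) (ψ.msubst σ)
  | .dia φ => .dia (φ.msubst σ)
  | .all x φ => .all x (φ.msubst (Function.update σ x (.inl x)))

/-- `φ^g`: replace every free variable `x` of `φ` by the constant `g x`. -/
def capp (g : ℕ → Cst) (φ : Fml Cst Rl ar) : Fml Cst Rl ar :=
  φ.msubst (fun x => .inr (g x))

end Fml

/-- The derivability relation `φ ⊢ ψ` of the calculus QRC₁. -/
inductive Der {Cst Rl : Type} {ar : Rl → ℕ} : Fml Cst Rl ar → Fml Cst Rl ar → Prop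
  | top (φ) : Der φ .top
  | refl (φ) : Der φ φ
  | andE1 (φ ψ) : Der (.and φ ψ) φ
  | andE2 (φ ψ) : Der (.and φ ψ) ψ
  | andI {φ ψ χ} : Der φ ψ → Der φ χ → Der φ (.and ψ χ)
  | cut {φ ψ χ} : Der φ ψ → Der ψ χ → Der φ χ
  | diaMono {φ ψ} : Der φ ψ → Der (.dia φ) (.dia ψ)
  | diaTrans (φ) : Der (.dia (.dia φ)) (.dia φ)
  | allI {φ ψ} (x) : Der φ ψ → x ∉ φ.fv → Der φ (.all x ψ)
  | allE {φ ψ} (x) (t : ℕ ⊕ Cst) : Der (φ.subst x t) ψ → Fml.FreeFor t x φ →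
      Der (.all x φ) ψ
  | inst {φ ψ} (x) (t : ℕ ⊕ Cst) : Der φ ψ → Fml.FreeFor t x φ → Fml.FreeFor t x ψ →
      Der (φ.subst x t) (ψ.subst x t)
  | genC {φ ψ} (x) (c : Cst) : Der (φ.subst x (.inr c)) (ψ.subst x (.inr c)) →
      c ∉ φ.consts → c ∉ ψ.consts → Der φ ψ

section Depths

variable {Cst Rl : Type} {ar : Rl → ℕ}

/-- Modal depth of a set of formulas (the supremum of the modal depths). -/
noncomputable def mdepthSet (Γ : Set (Fml Cst Rl ar)) : ℕ := sSup (Fml.mdepth '' Γ)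

/-- Quantifier depth of a set of formulas. -/
noncomputable def udepthSet (Γ : Set (Fml Cst Rl ar)) : ℕ := sSup (Fml.udepth '' Γ)

/-- Maximum number of distinct constants per formula in a set of formulas. -/
noncomputable def cdepthSet (Γ : Set (Fml Cst Rl ar)) : ℕ := sSup (Fml.cdepth '' Γ)

/-- Closure of a set of formulas under a set of constants. -/
def clSet (C : Set Cst) (Γ : Set (Fml Cst Rl ar)) : Set (Fml Cst Rl ar) :=
  ⋃ γ ∈ Γ, γ.cl C

/-- Conjunction of a finite list of formulas. -/
def conjList : List (Fml Cst Rl ar) → Fml Cst Rl ar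
  | [] => .top
  | φ :: L => .and φ (conjList L)

end Depths

/-- A pair `⟨p⁺, p⁻⟩` of sets of formulas. -/
structure Pair (Cst Rl : Type) (ar : Rl → ℕ) where
  pos : Set (Fml Cst Rl ar)
  neg : Set (Fml Cst Rl ar)

namespace Pair

variable {Cst Rl : Type} {ar : Rl → ℕ}

/-- All formulas of the pair are closed. -/
def ClosedP (p : Pair Cst Rl ar) : Prop := ∀ φ ∈ p.pos ∪ p.neg, φ.Closed

/-- Consistency: the conjunction of (finitely many formulas of) `p⁺` does not
derive any formula of `p⁻`. -/
def Consistent (p : Pair Cst Rl ar) : Prop :=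
  ∀ δ ∈ p.neg, ∀ L : List (Fml Cst Rl ar), (∀ χ ∈ L, χ ∈ p.pos) → ¬ Der (conjList L) δ

/-- `Φ`-maximality: every formula of `Φ` is in `p⁺` or in `p⁻`, and `p`
contains only formulas of `Φ`. -/
def MaximalIn (Φ : Set (Fml Cst Rl ar)) (p : Pair Cst Rl ar) : Prop :=
  (∀ χ ∈ Φ, χ ∈ p.pos ∨ χ ∈ p.neg) ∧ p.pos ∪ p.neg ⊆ Φ

/-- Fully witnessed: every negative universal has a constant witness. -/
def FullyWitnessed (p : Pair Cst Rl ar) : Prop :=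
  ∀ (x : ℕ) (φ : Fml Cst Rl ar), Fml.all x φ ∈ p.neg →
    ∃ c : Cst, φ.subst x (.inr c) ∈ p.neg

/-- `Φ`-maximal, consistent, fully witnessed (and closed) pair. -/
def MCW (Φ : Set (Fml Cst Rl ar)) (p : Pair Cst Rl ar) : Prop :=
  p.ClosedP ∧ p.MaximalIn Φ ∧ p.Consistent ∧ p.FullyWitnessed

end Pair

/-- The relation `R̂` between pairs. -/
def hatR {Cst Rl : Type} {ar : Rl → ℕ} (p q : Pair Cst Rl ar) : Prop :=
  (∀ φ : Fml Cst Rl ar, Fml.dia φ ∈ p.neg → φ ∈ q.neg ∧ Fml.dia φ ∈ q.neg) ∧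
  ∃ ψ : Fml Cst Rl ar, Fml.dia ψ ∈ p.pos ∧ Fml.dia ψ ∈ q.neg

/-- A relational model for QRC₁. -/
structure Model (Cst Rl : Type) (ar : Rl → ℕ) where
  W : Type
  R : W → W → Prop
  Dom : W → Type
  finDom : ∀ w, Finite (Dom w)
  η : ∀ w v, R w v → Dom w → Dom v
  I : ∀ w, Cst → Dom w
  J : ∀ w (S : Rl), Set (Fin (ar S) → Dom w)

namespace Model

variable {Cst Rl : Type} {ar : Rl → ℕ} (M : Model Cst Rl ar)

/-- Value of a term under a `w`-assignment. -/
def tval {w : M.W} (g : ℕ → M.Dom w) : ℕ ⊕ Cst → M.Dom w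
  | .inl x => g x
  | .inr c => M.I w c

/-- Kripke satisfaction `M, w ⊩^g φ`. -/
def Sat : (w : M.W) → (g : ℕ → M.Dom w) → Fml Cst Rl ar → Prop
  | _, _, .top => True
  | w, g, .rel S ts => (fun i => M.tval g (ts i)) ∈ M.J w S
  | w, g, .and φ ψ => Sat w g φ ∧ Sat w g ψ
  | w, g, .dia φ => ∃ (v : M.W) (h : M.R w v), Sat v (fun n => M.η w v h (g n)) φ
  | w, g, .all x φ => ∀ h : ℕ → M.Dom w, (∀ y, y ≠ x → h y = g y) → Sat w h φ

/-- Adequate models: transitive accessibility, transitive `η` functions, and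
concordant interpretation of constants. -/
structure Adequate : Prop where
  trans : Transitive M.R
  etaTrans : ∀ {w u v : M.W} (h1 : M.R w u) (h2 : M.R u v) (h3 : M.R w v),
    M.η w v h3 = M.η u v h2 ∘ M.η w u h1
  concord : ∀ {w u : M.W} (h : M.R w u) (c : Cst), M.I u c = M.η w u h (M.I w c)

/-- Constant domain: all worlds have the same domain. -/
def ConstantDomain : Prop := ∀ w v : M.W, M.Dom w = M.Dom v

end Model

/-!
The worlds of the model are formulas rather than maximal pairs: the formulas of the closure of
`φ₀` (quantifiers instantiated by a finite stock `D` of fresh variables and the constants of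
`p`) that are `φ₀` itself or whose `◇` is derivable from `φ₀`, with `w R v` iff `w ⊢ ◇v`. Every
domain is `D`, and a world forces the atoms it derives. The truth lemma comes in two halves: a
world satisfies every formula of the closure that it derives, so the root satisfies `φ₀`; and a
world derives every formula it satisfies, as long as enough fresh variables remain to serve as
eigenvariables for `∀`-introduction. Hence the root satisfies no `δ ∈ p⁻`, since that would
give `φ₀ ⊢ δ`. Irreflexivity holds because derivations never raise modal depth.
-/

namespace Fml

variable {Cst Rl : Type} {ar : Rl → ℕ}

def varsT : ℕ ⊕ Cst → Finset ℕ
  | .inl x => {x}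
  | .inr _ => ∅

def constsT : ℕ ⊕ Cst → Set Cst
  | .inl _ => ∅
  | .inr c => {c}

@[simp] theorem mem_varsT {y : ℕ} {t : ℕ ⊕ Cst} : y ∈ varsT t ↔ t = .inl y := by
  cases t <;> simp [varsT, eq_comm]

theorem card_varsT_le_one (t : ℕ ⊕ Cst) : (varsT t).card ≤ 1 := by
  cases t <;> simp [varsT]

def vars : Fml Cst Rl ar → Finset ℕ
  | .top => ∅
  | .rel _ ts => Finset.univ.biUnion fun i => varsT (ts i)
  | .and φ ψ => φ.vars ∪ ψ.vars
  | .dia φ => φ.vars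
  | .all x φ => insert x φ.vars

def binders : Fml Cst Rl ar → Finset ℕ
  | .top => ∅
  | .rel _ _ => ∅
  | .and φ ψ => φ.binders ∪ ψ.binders
  | .dia φ => φ.binders
  | .all x φ => insert x φ.binders

@[simp] theorem mem_vars_rel {y : ℕ} {S : Rl} {ts : Fin (ar S) → ℕ ⊕ Cst} :
    y ∈ (rel S ts).vars ↔ ∃ i, ts i = .inl y := by
  simp [vars]

theorem fv_subset_vars (φ : Fml Cst Rl ar) : φ.fv ⊆ ↑φ.vars := by
  induction φ with
  | top => simp [fv]
  | rel S ts => rintro x ⟨i, hi⟩; simpa using ⟨i, hi⟩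
  | and φ ψ ihφ ihψ =>
    simp only [fv, vars, Finset.coe_union]
    exact Set.union_subset_union ihφ ihψ
  | dia φ ih => exact ih
  | all y φ ih => exact fun x hx => Finset.mem_insert_of_mem (ih hx.1)

theorem binders_subset_vars (φ : Fml Cst Rl ar) : φ.binders ⊆ φ.vars := by
  induction φ with
  | top | rel => simp [binders]
  | and φ ψ ihφ ihψ => exact Finset.union_subset_union ihφ ihψ
  | dia φ ih => exact ih
  | all y φ ih => exact Finset.insert_subset_insert y ih

theorem consts_finite (φ : Fml Cst Rl ar) : φ.consts.Finite := by
  induction φ with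
  | top => simp [consts]
  | rel S ts => exact ((Set.finite_range ts).preimage Sum.inr_injective.injOn :)
  | and φ ψ ihφ ihψ => exact ihφ.union ihψ
  | dia φ ih => exact ih
  | all y φ ih => exact ih

theorem subst_eq_self_of_notMem_fv {φ : Fml Cst Rl ar} {x : ℕ} (t : ℕ ⊕ Cst)
    (h : x ∉ φ.fv) : φ.subst x t = φ := by
  induction φ with
  | top => rfl
  | rel S ts =>
    simp only [subst, rel.injEq, heq_eq_eq, true_and]
    funext i
    cases hi : ts i with
    | inl y => simp [substT, show y ≠ x by rintro rfl; exact h ⟨i, hi⟩]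
    | inr c => rfl
  | and φ ψ ihφ ihψ =>
    simp only [fv, Set.mem_union, not_or] at h
    simp [subst, ihφ h.1, ihψ h.2]
  | dia φ ih => simp [subst, ih h]
  | all y φ ih =>
    by_cases hyx : y = x
    · simp [subst, hyx]
    · simp [subst, hyx, ih fun hx => h ⟨hx, Ne.symm hyx⟩]

theorem binders_subst (φ : Fml Cst Rl ar) (x : ℕ) (t : ℕ ⊕ Cst) :
    (φ.subst x t).binders = φ.binders := by
  induction φ with
  | all y φ ih => by_cases hyx : y = x <;> simp [subst, hyx, binders, ih]
  | _ => simp_all [subst, binders]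

theorem udepth_subst (φ : Fml Cst Rl ar) (x : ℕ) (t : ℕ ⊕ Cst) :
    (φ.subst x t).udepth = φ.udepth := by
  induction φ with
  | all y φ ih => by_cases hyx : y = x <;> simp [subst, hyx, udepth, ih]
  | _ => simp_all [subst, udepth]

theorem mdepth_subst (φ : Fml Cst Rl ar) (x : ℕ) (t : ℕ ⊕ Cst) :
    (φ.subst x t).mdepth = φ.mdepth := by
  induction φ with
  | all y φ ih => by_cases hyx : y = x <;> simp [subst, hyx, mdepth, ih]
  | _ => simp_all [subst, mdepth]

theorem vars_subst_subset (φ : Fml Cst Rl ar) (x : ℕ) (t : ℕ ⊕ Cst) :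
    (φ.subst x t).vars ⊆ φ.vars ∪ varsT t := by
  induction φ with
  | top => simp [subst, vars]
  | rel S ts =>
    intro y
    simp only [subst, mem_vars_rel, Finset.mem_union, mem_varsT]
    rintro ⟨i, hi⟩
    cases hts : ts i with
    | inl z => by_cases hzx : z = x <;> simp_all [substT]; exact Or.inl ⟨i, hts⟩
    | inr c => simp_all [substT]
  | and φ ψ ihφ ihψ =>
    simp only [subst, vars]
    grind
  | dia φ ih => exact ih
  | all y φ ih =>
    by_cases hyx : y = x
    · simp only [subst, if_pos hyx, vars]
      exact Finset.subset_union_left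
    · simp only [subst, if_neg hyx, vars]
      grind

theorem fv_subst_subset (φ : Fml Cst Rl ar) (x : ℕ) (t : ℕ ⊕ Cst) :
    (φ.subst x t).fv ⊆ (all x φ).fv ∪ ↑(varsT t) := by
  induction φ with
  | top => simp [subst, fv]
  | rel S ts =>
    rintro y ⟨i, hi⟩
    cases hts : ts i with
    | inl z => by_cases hzx : z = x <;> simp_all [substT, fv]; exact Or.inl ⟨i, hts⟩
    | inr c => simp_all [substT]
  | and φ ψ ihφ ihψ =>
    simp only [subst, fv] at ihφ ihψ ⊢
    grind
  | dia φ ih => exact ih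
  | all z φ ih =>
    by_cases hzx : z = x
    · simp only [subst, if_pos hzx, fv]
      grind
    · simp only [subst, if_neg hzx, fv] at ih ⊢
      grind

theorem consts_subst_subset (φ : Fml Cst Rl ar) (x : ℕ) (t : ℕ ⊕ Cst) :
    (φ.subst x t).consts ⊆ φ.consts ∪ constsT t := by
  induction φ with
  | top => simp [subst, consts]
  | rel S ts =>
    rintro c ⟨i, hi⟩
    cases hts : ts i with
    | inl z => by_cases hzx : z = x <;> simp_all [substT, constsT]
    | inr c => simp_all [substT, consts]; exact Or.inl ⟨i, hts⟩
  | and φ ψ ihφ ihψ =>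
    simp only [subst, consts] at ihφ ihψ ⊢
    grind
  | dia φ ih => exact ih
  | all z φ ih =>
    by_cases hzx : z = x
    · simp only [subst, if_pos hzx, consts]
      exact Set.subset_union_left
    · simp only [subst, if_neg hzx, consts]
      exact ih

theorem freeFor_of_forall_binders {φ : Fml Cst Rl ar} {t : ℕ ⊕ Cst} (x : ℕ)
    (h : ∀ z ∈ φ.binders, t ≠ .inl z) : FreeFor t x φ := by
  induction φ with
  | top | rel => trivial
  | and φ ψ ihφ ihψ =>
    exact ⟨ihφ fun z hz => h z (by simp [binders, hz]),
      ihψ fun z hz => h z (by simp [binders, hz])⟩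
  | dia φ ih => exact ih h
  | all y φ ih =>
    exact Or.inr ⟨h y (Finset.mem_insert_self _ _),
      ih fun z hz => h z (Finset.mem_insert_of_mem hz)⟩

theorem subst_subst_var_cancel {φ : Fml Cst Rl ar} {x y : ℕ} (hy : y ∉ φ.vars) :
    (φ.subst x (.inl y)).subst y (.inl x) = φ := by
  induction φ with
  | top => rfl
  | rel S ts =>
    simp only [subst, rel.injEq, heq_eq_eq, true_and]
    funext i
    cases hts : ts i with
    | inl z =>
      have hzy : z ≠ y := by rintro rfl; exact hy (mem_vars_rel.2 ⟨i, hts⟩)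
      by_cases hzx : z = x <;> simp [substT, hzx, hzy]
    | inr c => rfl
  | and φ ψ ihφ ihψ =>
    simp only [vars, Finset.mem_union, not_or] at hy
    simp [subst, ihφ hy.1, ihψ hy.2]
  | dia φ ih => simp [subst, ih hy]
  | all z φ ih =>
    by_cases hzx : z = x
    · subst hzx
      rw [show (all z φ).subst z (.inl y) = all z φ by simp [subst]]
      exact subst_eq_self_of_notMem_fv _ fun h => hy (fv_subset_vars _ h)
    · simp only [vars, Finset.mem_insert, not_or] at hy
      simp [subst, hzx, Ne.symm hy.1, ih hy.2]

theorem freeFor_subst_var {φ : Fml Cst Rl ar} {x y : ℕ} (hy : y ∉ φ.vars) :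
    FreeFor (.inl x) y (φ.subst x (.inl y)) := by
  induction φ with
  | top | rel => trivial
  | and φ ψ ihφ ihψ =>
    simp only [vars, Finset.mem_union, not_or] at hy
    exact ⟨ihφ hy.1, ihψ hy.2⟩
  | dia φ ih => exact ih hy
  | all z φ ih =>
    simp only [vars, Finset.mem_insert, not_or] at hy
    by_cases hzx : z = x
    · subst hzx
      simp only [subst]
      exact Or.inl fun h => hy.2 (fv_subset_vars φ (Set.mem_of_mem_sdiff h))
    · simp only [subst, if_neg hzx]
      exact Or.inr ⟨by simp [Ne.symm hzx], ih hy.2⟩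

/-- Well founded because substitution preserves `size`. -/
theorem induction_on_subst {motive : Fml Cst Rl ar → Prop} (top : motive .top)
    (rel : ∀ S ts, motive (.rel S ts))
    (and : ∀ φ ψ, motive φ → motive ψ → motive (.and φ ψ))
    (dia : ∀ φ, motive φ → motive (.dia φ))
    (all : ∀ x φ, (∀ t, motive (φ.subst x t)) → motive (.all x φ)) (φ : Fml Cst Rl ar) :
    motive φ := by
  induction hn : φ.size using Nat.strong_induction_on generalizing φ with
  | _ n ih =>
    cases φ with
    | top => exact top
    | rel S ts => exact rel S ts
    | and φ ψ =>
      simp only [size] at hn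
      exact and φ ψ (ih _ (by omega) φ rfl) (ih _ (by omega) ψ rfl)
    | dia φ => exact dia φ (ih _ (by simp [size] at hn; omega) φ rfl)
    | all x φ => exact all x φ fun t => ih _ (by simp [size, size_subst] at hn ⊢; omega) _ rfl

end Fml

namespace Der

variable {Cst Rl : Type} {ar : Rl → ℕ}

theorem mdepth_le {φ ψ : Fml Cst Rl ar} (h : Der φ ψ) : ψ.mdepth ≤ φ.mdepth := by
  induction h with
  | andI _ _ ih₁ ih₂ => exact max_le ih₁ ih₂
  | cut _ _ ih₁ ih₂ => exact ih₂.trans ih₁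
  | andE1 | andE2 => simp [Fml.mdepth]
  | _ => simp_all [Fml.mdepth, Fml.mdepth_subst]

theorem dia_trans {φ ψ χ : Fml Cst Rl ar} (h₁ : Der φ (.dia ψ)) (h₂ : Der ψ (.dia χ)) :
    Der φ (.dia χ) :=
  h₁.cut ((diaMono h₂).cut (diaTrans χ))

theorem all_rename {φ : Fml Cst Rl ar} {x y : ℕ} (hy : y ∉ φ.vars) :
    Der (.all y (φ.subst x (.inl y))) (.all x φ) := by
  refine allI x (allE y (.inl x) ?_ (Fml.freeFor_subst_var hy)) fun hx => ?_
  · rw [Fml.subst_subst_var_cancel hy]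
    exact refl φ
  · obtain ⟨hx, hxy⟩ := hx
    rcases Fml.fv_subst_subset φ x _ hx with ⟨-, hxx⟩ | hx
    · exact hxx rfl
    · exact hxy (by simpa [eq_comm] using hx)

theorem allI_of_fresh {θ φ : Fml Cst Rl ar} {x y : ℕ} (h : Der θ (φ.subst x (.inl y)))
    (hyφ : y ∉ φ.vars) (hyθ : y ∉ θ.vars) : Der θ (.all x φ) :=
  (allI y h fun h => hyθ (Fml.fv_subset_vars θ h)).cut (all_rename hyφ)

end Der

namespace Model

variable {Cst Rl : Type} {ar : Rl → ℕ} (M : Model Cst Rl ar)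

open Function

theorem sat_all_iff {w : M.W} {g : ℕ → M.Dom w} {x : ℕ} {φ : Fml Cst Rl ar} :
    M.Sat w g (.all x φ) ↔ ∀ a, M.Sat w (update g x a) φ := by
  refine ⟨fun h a => h _ fun y hy => update_of_ne hy _ _, fun h g' hg' => ?_⟩
  have : g' = update g x (g' x) := by
    funext y
    by_cases hy : y = x
    · subst hy; simp
    · simp [hy, hg' y hy]
  exact this ▸ h _

theorem sat_congr {φ : Fml Cst Rl ar} {w : M.W} {g h : ℕ → M.Dom w}
    (hgh : Set.EqOn g h φ.fv) : M.Sat w g φ ↔ M.Sat w h φ := by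
  induction φ generalizing w with
  | top => rfl
  | rel S ts =>
    suffices (fun i => M.tval g (ts i)) = fun i => M.tval h (ts i) by simp only [Sat, this]
    funext i
    cases hi : ts i with
    | inl y => exact hgh ⟨i, hi⟩
    | inr c => rfl
  | and φ ψ ihφ ihψ =>
    exact and_congr (ihφ fun y hy => hgh (Or.inl hy)) (ihψ fun y hy => hgh (Or.inr hy))
  | dia φ ih =>
    exact exists_congr fun v => exists_congr fun hv => ih fun y hy => congrArg _ (hgh hy)
  | all x φ ih =>
    rw [sat_all_iff, sat_all_iff]
    refine forall_congr' fun a => ih fun y hy => ?_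
    by_cases hyx : y = x
    · simp [hyx]
    · simp [hyx, hgh ⟨hy, hyx⟩]

theorem sat_closed_iff {φ : Fml Cst Rl ar} (hφ : φ.Closed) {w : M.W} (g h : ℕ → M.Dom w) :
    M.Sat w g φ ↔ M.Sat w h φ :=
  M.sat_congr fun y hy => by rw [show φ.fv = ∅ from hφ] at hy; exact absurd hy id

variable {M}

theorem tval_comp_of_concord
    (hI : ∀ {w v : M.W} (h : M.R w v) (c : Cst), M.I v c = M.η w v h (M.I w c))
    {w v : M.W} (hv : M.R w v) (g : ℕ → M.Dom w) (t : ℕ ⊕ Cst) :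
    M.tval (fun n => M.η w v hv (g n)) t = M.η w v hv (M.tval g t) := by
  cases t with
  | inl y => rfl
  | inr c => exact hI hv c

/-- Concordance is needed because the `◇` clause transports the value of `t` along `η`. -/
theorem sat_subst
    (hI : ∀ {w v : M.W} (h : M.R w v) (c : Cst), M.I v c = M.η w v h (M.I w c))
    {φ : Fml Cst Rl ar} {x : ℕ} {t : ℕ ⊕ Cst} (hft : φ.FreeFor t x) {w : M.W}
    (g : ℕ → M.Dom w) :
    M.Sat w g (φ.subst x t) ↔ M.Sat w (update g x (M.tval g t)) φ := by
  induction φ generalizing w with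
  | top => rfl
  | rel S ts =>
    suffices (fun i => M.tval g (Fml.substT x t (ts i))) =
        fun i => M.tval (update g x (M.tval g t)) (ts i) by simp only [Fml.subst, Sat, this]
    funext i
    cases ts i with
    | inl y => by_cases hyx : y = x <;> simp [Fml.substT, hyx, tval]
    | inr c => rfl
  | and φ ψ ihφ ihψ => exact and_congr (ihφ hft.1 g) (ihψ hft.2 g)
  | dia φ ih =>
    refine exists_congr fun v => exists_congr fun hv => ?_
    rw [ih hft, tval_comp_of_concord hI]
    simp only [← comp_apply (f := M.η w v hv), comp_update]
  | all z φ ih =>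
    by_cases hx : x ∈ (Fml.all z φ).fv
    · obtain ⟨hxφ, hxz⟩ := hx
      have hzx : z ≠ x := Ne.symm hxz
      obtain ⟨htz, hft⟩ := hft.resolve_left fun h => h ⟨hxφ, hxz⟩
      simp only [Fml.subst, if_neg hzx]
      rw [sat_all_iff, sat_all_iff]
      refine forall_congr' fun a => ?_
      have htval : M.tval (update g z a) t = M.tval g t := by
        cases t with
        | inl y => exact update_of_ne (by rintro rfl; exact htz rfl) _ _
        | inr c => rfl
      rw [ih hft, htval, update_comm hzx]
    · rw [Fml.subst_eq_self_of_notMem_fv t hx]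
      refine (M.sat_congr fun y hy => ?_).symm
      exact update_of_ne (by rintro rfl; exact hx hy) _ _

end Model

namespace Fml

variable {Cst Rl : Type} {ar : Rl → ℕ}

def children (D : Finset (ℕ ⊕ Cst)) : Fml Cst Rl ar → Set (Fml Cst Rl ar)
  | .and φ ψ => {φ, ψ}
  | .dia φ => {φ}
  | .all x φ => (φ.subst x ·) '' ↑D
  | _ => ∅

/-- The paper's `Cl_C(φ)`, with the terms of `D` in place of the constants `C`. -/
def closure (D : Finset (ℕ ⊕ Cst)) (φ : Fml Cst Rl ar) : Set (Fml Cst Rl ar) :=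
  {χ | Relation.ReflTransGen (fun θ χ => χ ∈ θ.children D) φ χ}

section Closure

variable {D : Finset (ℕ ⊕ Cst)}

theorem size_lt_of_mem_children {θ χ : Fml Cst Rl ar} (h : χ ∈ θ.children D) :
    χ.size < θ.size := by
  cases θ with
  | top | rel => simp [children] at h
  | and φ ψ => rcases h with rfl | rfl <;> simp only [size] <;> omega
  | dia φ => rcases h with rfl; simp [size]
  | all x φ => obtain ⟨t, -, rfl⟩ := h; simp [size, size_subst]

theorem children_finite (θ : Fml Cst Rl ar) : (θ.children D).Finite := by
  cases θ with
  | all x φ => exact D.finite_toSet.image _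
  | _ => simp [children]

theorem mem_closure_self (θ : Fml Cst Rl ar) : θ ∈ θ.closure D :=
  Relation.ReflTransGen.refl

theorem mem_closure_of_mem_children {θ χ χ' : Fml Cst Rl ar} (hχ : χ ∈ θ.closure D)
    (h : χ' ∈ χ.children D) : χ' ∈ θ.closure D :=
  Relation.ReflTransGen.tail hχ h

theorem closure_eq_insert (θ : Fml Cst Rl ar) :
    θ.closure D = insert θ (⋃ χ ∈ θ.children D, χ.closure D) := by
  ext χ
  simp only [closure, Set.mem_ofPred_eq, Set.mem_insert_iff, Set.mem_iUnion, exists_prop]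
  rw [Relation.ReflTransGen.cases_head_iff, eq_comm]

theorem closure_finite (θ : Fml Cst Rl ar) : (θ.closure D).Finite := by
  induction hn : θ.size using Nat.strong_induction_on generalizing θ with
  | _ n ih =>
    rw [closure_eq_insert]
    exact ((children_finite θ).biUnion fun χ hχ =>
      ih _ (hn ▸ size_lt_of_mem_children hχ) χ rfl).insert θ

theorem closure_induction {P : Fml Cst Rl ar → Prop}
    (and : ∀ φ ψ, P (.and φ ψ) → P φ ∧ P ψ) (dia : ∀ φ, P (.dia φ) → P φ)
    (all : ∀ x φ t, t ∈ D → P (.all x φ) → P (φ.subst x t))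
    {θ χ : Fml Cst Rl ar} (hθ : P θ) (hχ : χ ∈ θ.closure D) : P χ := by
  induction hχ with
  | refl => exact hθ
  | @tail ξ _ _ hstep ih =>
    cases ξ with
    | top | rel => simp [children] at hstep
    | and φ ψ => rcases hstep with rfl | rfl; exacts [(and _ _ ih).1, (and _ _ ih).2]
    | dia φ => rcases hstep with rfl; exact dia _ ih
    | all x φ => obtain ⟨t, ht, rfl⟩ := hstep; exact all _ _ _ ht ih

end Closure

/-- Instantiating a quantifier adds at most one variable of `V` and removes one quantifier, so
the weight does not grow along the closure; it bounds the number of variables of `V` that a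
world of the term model uses. -/
def weight (V : Finset ℕ) (φ : Fml Cst Rl ar) : ℕ := (φ.vars ∩ V).card + φ.udepth

section Weight

variable {V : Finset ℕ}

theorem weight_eq_udepth_of_disjoint {φ : Fml Cst Rl ar} (h : Disjoint φ.vars V) :
    φ.weight V = φ.udepth := by
  simp [weight, Finset.disjoint_iff_inter_eq_empty.1 h]

theorem weight_and_left (φ ψ : Fml Cst Rl ar) : φ.weight V ≤ (φ.and ψ).weight V :=
  add_le_add (Finset.card_le_card (Finset.inter_subset_inter Finset.subset_union_left le_rfl))
    (le_max_left _ _)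

theorem weight_and_right (φ ψ : Fml Cst Rl ar) : ψ.weight V ≤ (φ.and ψ).weight V :=
  add_le_add (Finset.card_le_card (Finset.inter_subset_inter Finset.subset_union_right le_rfl))
    (le_max_right _ _)

theorem weight_subst_le (x : ℕ) (φ : Fml Cst Rl ar) (t : ℕ ⊕ Cst) :
    (φ.subst x t).weight V ≤ (all x φ).weight V := by
  have hvars : (φ.subst x t).vars ∩ V ⊆ ((all x φ).vars ∩ V) ∪ varsT t := fun y hy => by
    have := vars_subst_subset φ x t (Finset.mem_inter.1 hy).1
    simp only [vars, Finset.mem_union, Finset.mem_inter, Finset.mem_insert] at this hy ⊢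
    tauto
  have hcard := (Finset.card_le_card hvars).trans (Finset.card_union_le _ _)
  have := card_varsT_le_one t
  simp only [weight, udepth, udepth_subst]
  omega

theorem weight_le_of_mem_closure {D : Finset (ℕ ⊕ Cst)} {θ χ : Fml Cst Rl ar}
    (hχ : χ ∈ θ.closure D) : χ.weight V ≤ θ.weight V :=
  closure_induction (P := fun χ => χ.weight V ≤ θ.weight V)
    (fun φ ψ h => ⟨(weight_and_left φ ψ).trans h, (weight_and_right φ ψ).trans h⟩)
    (fun _ h => h) (fun x φ t _ h => (weight_subst_le x φ t).trans h) le_rfl hχ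

end Weight

/-- Since no variable of `V` is bound in `φ`, every element of the term-model domain
`V.disjSum C` is free for substitution in `φ`. -/
structure Adapted (V : Finset ℕ) (C : Finset Cst) (φ : Fml Cst Rl ar) : Prop where
  fv_subset : φ.fv ⊆ ↑V
  consts_subset : φ.consts ⊆ ↑C
  disjoint_binders : Disjoint φ.binders V

namespace Adapted

variable {V : Finset ℕ} {C : Finset Cst}

theorem of_closed {φ : Fml Cst Rl ar} (hφ : φ.Closed) (hC : φ.consts ⊆ ↑C)
    (hV : Disjoint φ.vars V) : Adapted V C φ :=
  ⟨by rw [show φ.fv = ∅ from hφ]; exact Set.empty_subset _, hC,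
    hV.mono_left (binders_subset_vars φ)⟩

theorem and_left {φ ψ : Fml Cst Rl ar} (h : Adapted V C (φ.and ψ)) : Adapted V C φ :=
  ⟨fun _ hy => h.1 (Or.inl hy), fun _ hc => h.2 (Or.inl hc),
    h.3.mono_left Finset.subset_union_left⟩

theorem and_right {φ ψ : Fml Cst Rl ar} (h : Adapted V C (φ.and ψ)) : Adapted V C ψ :=
  ⟨fun _ hy => h.1 (Or.inr hy), fun _ hc => h.2 (Or.inr hc),
    h.3.mono_left Finset.subset_union_right⟩

theorem of_dia {φ : Fml Cst Rl ar} (h : Adapted V C φ.dia) : Adapted V C φ := ⟨h.1, h.2, h.3⟩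

theorem freeFor {x : ℕ} {φ : Fml Cst Rl ar} {t : ℕ ⊕ Cst} (h : Adapted V C (all x φ))
    (ht : t ∈ V.disjSum C) : φ.FreeFor t x :=
  freeFor_of_forall_binders x fun z hz htz => by
    subst htz
    exact Finset.disjoint_left.1 h.3 (Finset.mem_insert_of_mem hz) (by simpa using ht)

theorem subst {x : ℕ} {φ : Fml Cst Rl ar} {t : ℕ ⊕ Cst} (h : Adapted V C (all x φ))
    (ht : t ∈ V.disjSum C) : Adapted V C (φ.subst x t) := by
  refine ⟨fun y hy => ?_, fun c hc => ?_, ?_⟩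
  · rcases fv_subst_subset φ x t hy with hy | hy
    · exact h.1 hy
    · obtain rfl : t = .inl y := by simpa using hy
      simpa using ht
  · rcases consts_subst_subset φ x t hc with hc | hc
    · exact h.2 hc
    · cases t with
      | inl => simp [constsT] at hc
      | inr c' => obtain rfl : c = c' := hc; simpa using ht
  · rw [binders_subst]
    exact h.3.mono_left (Finset.subset_insert x _)

theorem mem_disjSum_of_rel {S : Rl} {ts : Fin (ar S) → ℕ ⊕ Cst} (h : Adapted V C (rel S ts))
    (i : Fin (ar S)) : ts i ∈ V.disjSum C := by
  cases hi : ts i with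
  | inl y => simpa using h.1 ⟨i, hi⟩
  | inr c => simpa using h.2 ⟨i, hi⟩

theorem of_mem_closure {θ χ : Fml Cst Rl ar} (h : Adapted V C θ)
    (hχ : χ ∈ θ.closure (V.disjSum C)) : Adapted V C χ :=
  closure_induction (fun _ _ h => ⟨h.and_left, h.and_right⟩) (fun _ h => h.of_dia)
    (fun _ _ _ ht h => h.subst ht) h hχ

end Adapted

theorem exists_adapted {Γ : Set (Fml Cst Rl ar)} (hΓ : Γ.Finite) (hcl : ∀ φ ∈ Γ, φ.Closed)
    (n : ℕ) : ∃ (V : Finset ℕ) (C : Finset Cst), V.card = n ∧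
      ∀ φ ∈ Γ, φ.Adapted V C ∧ Disjoint φ.vars V := by
  have hvars : (⋃ φ ∈ Γ, (φ.vars : Set ℕ)).Finite := hΓ.biUnion fun φ _ => φ.vars.finite_toSet
  have hconsts : (⋃ φ ∈ Γ, φ.consts).Finite := hΓ.biUnion fun φ _ => φ.consts_finite
  obtain ⟨V, hV, hcard⟩ := hvars.infinite_compl.exists_subset_card_eq n
  refine ⟨V, hconsts.toFinset, hcard, fun φ hφ => ?_⟩
  have hdisj : Disjoint φ.vars V :=
    Finset.disjoint_left.2 fun y hy hyV => hV hyV (Set.mem_biUnion hφ hy)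
  exact ⟨.of_closed (hcl φ hφ) (fun c hc => by simpa using Set.mem_biUnion hφ hc) hdisj, hdisj⟩

end Fml

theorem exists_fresh_var {A B V : Finset ℕ} (h : (A ∩ V).card + (B ∩ V).card < V.card) :
    ∃ y ∈ V, y ∉ A ∧ y ∉ B := by
  have hcard : ((A ∪ B) ∩ V).card < V.card := by
    rw [Finset.union_inter_distrib_right]
    exact (Finset.card_union_le _ _).trans_lt h
  obtain ⟨y, hyV, hy⟩ := Finset.exists_mem_notMem_of_card_lt_card hcard
  simp only [Finset.mem_inter, Finset.mem_union, hyV, and_true, not_or] at hy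
  exact ⟨y, hyV, hy⟩

section TermModel

variable {Cst Rl : Type} {ar : Rl → ℕ}

open Classical in
noncomputable def toDom {D : Finset (ℕ ⊕ Cst)} (d₀ : D) (t : ℕ ⊕ Cst) : D :=
  if h : t ∈ D then ⟨t, h⟩ else d₀

theorem toDom_of_mem {D : Finset (ℕ ⊕ Cst)} (d₀ : D) {t : ℕ ⊕ Cst} (h : t ∈ D) :
    toDom d₀ t = ⟨t, h⟩ := by
  rw [toDom, dif_pos h]

noncomputable def termModel (φ₀ : Fml Cst Rl ar) (D : Finset (ℕ ⊕ Cst)) (d₀ : D) :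
    Model Cst Rl ar where
  W := {χ // χ ∈ φ₀.closure D ∧ (χ = φ₀ ∨ Der φ₀ (.dia χ))}
  R w v := Der w.1 (.dia v.1)
  Dom _ := D
  finDom _ := inferInstance
  η _ _ _ := id
  I _ c := toDom d₀ (.inr c)
  J w S := {a | Der w.1 (.rel S fun i => (a i).1)}

namespace termModel

variable (φ₀ : Fml Cst Rl ar) {D : Finset (ℕ ⊕ Cst)} (d₀ : D)

def root : (termModel φ₀ D d₀).W := ⟨φ₀, Fml.mem_closure_self φ₀, Or.inl rfl⟩

theorem R_root {v : (termModel φ₀ D d₀).W} (hv : v ≠ root φ₀ d₀) :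
    (termModel φ₀ D d₀).R (root φ₀ d₀) v :=
  v.2.2.resolve_left fun h => hv (Subtype.ext h)

theorem adequate : (termModel φ₀ D d₀).Adequate where
  trans _ _ _ := Der.dia_trans
  etaTrans _ _ _ := rfl
  concord _ _ := rfl

theorem finite_W : Finite (termModel φ₀ D d₀).W :=
  ((Fml.closure_finite φ₀).subset fun _ hχ => hχ.1).to_subtype

theorem irreflexive : Irreflexive (termModel φ₀ D d₀).R := fun w hw => by
  simpa [Fml.mdepth] using hw.mdepth_le

noncomputable def canonicalAssign : ℕ → D := fun y => toDom d₀ (.inl y)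

theorem tval_canonicalAssign {w : (termModel φ₀ D d₀).W} (t : ℕ ⊕ Cst) :
    (termModel φ₀ D d₀).tval (w := w) (canonicalAssign d₀) t = toDom d₀ t := by
  cases t <;> rfl

theorem sat_rel_iff {w : (termModel φ₀ D d₀).W} {S : Rl} {ts : Fin (ar S) → ℕ ⊕ Cst}
    (hts : ∀ i, ts i ∈ D) :
    (termModel φ₀ D d₀).Sat w (canonicalAssign d₀) (.rel S ts) ↔ Der w.1 (.rel S ts) := by
  change Der w.1 (.rel S fun i => ((termModel φ₀ D d₀).tval (canonicalAssign d₀) (ts i)).1) ↔ _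
  simp only [tval_canonicalAssign, toDom_of_mem d₀ (hts _)]

variable {φ₀} {V : Finset ℕ} {C : Finset Cst} {d₀ : V.disjSum C}

theorem sat_of_der (hφ₀ : φ₀.Adapted V C) (χ : Fml Cst Rl ar)
    (hχ : χ ∈ φ₀.closure (V.disjSum C)) (w : (termModel φ₀ (V.disjSum C) d₀).W)
    (hw : Der w.1 χ) : (termModel φ₀ (V.disjSum C) d₀).Sat w (canonicalAssign d₀) χ := by
  induction χ using Fml.induction_on_subst generalizing w with
  | top => trivial
  | rel S ts => exact (sat_rel_iff φ₀ d₀ (hφ₀.of_mem_closure hχ).mem_disjSum_of_rel).2 hw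
  | and φ ψ ihφ ihψ =>
    exact ⟨ihφ (Fml.mem_closure_of_mem_children hχ (by simp [Fml.children])) w
        (hw.cut (Der.andE1 φ ψ)),
      ihψ (Fml.mem_closure_of_mem_children hχ (by simp [Fml.children])) w
        (hw.cut (Der.andE2 φ ψ))⟩
  | dia φ ih =>
    have hφ := Fml.mem_closure_of_mem_children hχ (Set.mem_singleton φ)
    have hroot : Der φ₀ (.dia φ) := w.2.2.elim (fun h => h ▸ hw) (·.dia_trans hw)
    exact ⟨⟨φ, hφ, Or.inr hroot⟩, hw, ih hφ _ (Der.refl φ)⟩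
  | all x φ ih =>
    refine (Model.sat_all_iff _).2 fun ⟨t, ht⟩ => ?_
    have hft := (hφ₀.of_mem_closure hχ).freeFor ht
    have := ih t (Fml.mem_closure_of_mem_children hχ ⟨t, ht, rfl⟩) w
      (hw.cut (Der.allE x t (Der.refl _) hft))
    have := (Model.sat_subst (adequate φ₀ d₀).concord hft (canonicalAssign d₀)).1 this
    rwa [tval_canonicalAssign, toDom_of_mem d₀ ht] at this

theorem der_of_sat (χ : Fml Cst Rl ar) (hχ : χ.Adapted V C)
    (hweight : χ.weight V + φ₀.weight V < V.card) (w : (termModel φ₀ (V.disjSum C) d₀).W)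
    (hs : (termModel φ₀ (V.disjSum C) d₀).Sat w (canonicalAssign d₀) χ) : Der w.1 χ := by
  induction χ using Fml.induction_on_subst generalizing w with
  | top => exact Der.top _
  | rel S ts => exact (sat_rel_iff φ₀ d₀ hχ.mem_disjSum_of_rel).1 hs
  | and φ ψ ihφ ihψ =>
    have hφ := Fml.weight_and_left φ ψ (V := V)
    have hψ := Fml.weight_and_right φ ψ (V := V)
    exact Der.andI (ihφ hχ.and_left (by omega) w hs.1) (ihψ hχ.and_right (by omega) w hs.2)
  | dia φ ih =>
    obtain ⟨v, hv, hs⟩ := hs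
    exact hv.cut (Der.diaMono (ih hχ.of_dia hweight v hs))
  | all x φ ih =>
    have hwV : (w.1.vars ∩ V).card ≤ φ₀.weight V :=
      (Nat.le_add_right _ _).trans (Fml.weight_le_of_mem_closure w.2.1)
    have hall : (Fml.all x φ).weight V = ((Fml.all x φ).vars ∩ V).card + φ.udepth + 1 := rfl
    obtain ⟨y, hyV, hyχ, hyw⟩ := exists_fresh_var (A := (Fml.all x φ).vars) (B := w.1.vars)
      (V := V) (by omega)
    have hyφ : y ∉ φ.vars := fun h => hyχ (Finset.mem_insert_of_mem h)
    have hft : φ.FreeFor (.inl y) x := Fml.freeFor_of_forall_binders x fun z hz h => by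
      cases h
      exact hyφ (Fml.binders_subset_vars φ hz)
    have hsat := (Model.sat_subst (adequate φ₀ d₀).concord hft (canonicalAssign d₀)).2
      ((Model.sat_all_iff _).1 hs _)
    have hsubst := Fml.weight_subst_le x φ (.inl y) (V := V)
    exact (ih _ (hχ.subst (Finset.inl_mem_disjSum.2 hyV)) (by omega) w hsat).allI_of_fresh
      hyφ hyw

end termModel

end TermModel

theorem term_model_properties (Cst Rl : Type) (ar : Rl → ℕ)
    (p : Pair Cst Rl ar) (hposfin : p.pos.Finite) (hnegfin : p.neg.Finite)
    (hclosed : p.ClosedP) (hcons : p.Consistent)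
    (hsing : ∃ φ₀ : Fml Cst Rl ar, p.pos = {φ₀}) :
    ∃ M : Model Cst Rl ar, M.Adequate ∧ Finite M.W ∧ Irreflexive M.R ∧
      M.ConstantDomain ∧
      ∃ w₀ : M.W, (∀ v : M.W, v ≠ w₀ → M.R w₀ v) ∧
        ∀ g : ℕ → M.Dom w₀,
          (∀ φ ∈ p.pos, M.Sat w₀ g φ) ∧ (∀ φ ∈ p.neg, ¬ M.Sat w₀ g φ) := by
  obtain ⟨φ₀, hpos⟩ := hsing
  have hfin := hposfin.union hnegfin
  obtain ⟨U, hU⟩ := (hfin.image Fml.udepth).bddAbove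
  obtain ⟨V, C, hcard, hVC⟩ := Fml.exists_adapted hfin hclosed (U + U + 1)
  obtain ⟨y, hy⟩ := Finset.card_pos.1 (hcard ▸ Nat.succ_pos _ : 0 < V.card)
  have hφ₀ : φ₀ ∈ p.pos ∪ p.neg := Or.inl (hpos ▸ rfl)
  let d₀ : V.disjSum C := ⟨.inl y, Finset.inl_mem_disjSum.2 hy⟩
  let w₀ := termModel.root φ₀ d₀
  refine ⟨termModel φ₀ _ d₀, termModel.adequate φ₀ d₀, termModel.finite_W φ₀ d₀,
    termModel.irreflexive φ₀ d₀, fun _ _ => rfl, w₀, fun _ => termModel.R_root φ₀ d₀,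
    fun g => ⟨fun φ hφ => ?_, fun δ hδ hsat => ?_⟩⟩
  · obtain rfl : φ = φ₀ := by rwa [hpos] at hφ
    exact (Model.sat_closed_iff _ (hclosed φ hφ₀) _ _).1
      (termModel.sat_of_der (hVC φ hφ₀).1 φ (Fml.mem_closure_self φ) w₀ (Der.refl φ))
  · have hδ' : δ ∈ p.pos ∪ p.neg := Or.inr hδ
    refine hcons δ hδ [φ₀] (by simp [hpos]) ((Der.andE1 φ₀ .top).cut ?_)
    refine termModel.der_of_sat δ (hVC δ hδ').1 ?_ w₀
      ((Model.sat_closed_iff _ (hclosed δ hδ') _ _).1 hsat)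
    rw [Fml.weight_eq_udepth_of_disjoint (hVC δ hδ').2,
      Fml.weight_eq_udepth_of_disjoint (hVC φ₀ hφ₀).2]
    have := hU ⟨δ, hδ', rfl⟩
    have := hU ⟨φ₀, hφ₀, rfl⟩
    omega

end QRC1
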